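/- Let k ≥ 3 be odd and n ≥ 3k + 1 be even, and let D = ⌊(n-k-3)/(2(k-1))⌋ + 2. Then the Harary graph H_{k,n} has diameter D and Wiener index W(H_{k,n}) = (1/4)·n·D·(2n+4k-8-2(k-1)D) - (1/2)·n·(k-2). -/

import Mathlib

open Finset SimpleGraph

/-- The status of a vertex: sum of distances to all other vertices. -/
noncomputable def status {V : Type*} [Fintype V] (G : SimpleGraph V) (x : V) : ℕ :=
  ∑ y, G.dist x y

/-- The Wiener index: sum of distances over unordered pairs of vertices. -/
noncomputable def wiener {V : Type*} [Fintype V] [DecidableEq V] (G : SimpleGraph V) : ℚ :=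
  (∑ p ∈ Finset.univ.offDiag, (G.dist p.1 p.2 : ℚ)) / 2

/-- Eccentricity of a vertex. -/
noncomputable def ecc {V : Type*} [Fintype V] (G : SimpleGraph V) (x : V) : ℕ :=
  Finset.univ.sup (fun y => G.dist x y)

/-- Diameter: maximum distance between pairs of vertices. -/
noncomputable def graphDiam {V : Type*} [Fintype V] (G : SimpleGraph V) : ℕ :=
  Finset.univ.sup (fun p : V × V => G.dist p.1 p.2)

/-- The set of vertices at distance exactly `i` from `x`. -/
noncomputable def sphere {V : Type*} [Fintype V] [DecidableEq V] (G : SimpleGraph V) (x : V) (i : ℕ) :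
    Finset V :=
  Finset.univ.filter (fun y => G.dist x y = i)

/-- `G` is `k`-connected: more than `k` vertices and removing any `k-1` vertices
leaves a connected graph. -/
def IsKConnected {V : Type*} [Fintype V] (G : SimpleGraph V) (k : ℕ) : Prop :=
  k < Fintype.card V ∧
    ∀ S : Finset V, S.card ≤ k - 1 → (G.induce ((↑S : Set V)ᶜ)).Connected
/-- Circular distance between two positions on a cycle of length `n`. -/
def circDist (n : ℕ) (i j : Fin n) : ℕ :=
  min ((i.val + n - j.val) % n) ((j.val + n - i.val) % n)

lemma circDist_comm (n : ℕ) (i j : Fin n) : circDist n i j = circDist n j i := by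
  unfold circDist; exact min_comm _ _

/-- The Harary graph `H_{k,n}` for `k` even: each vertex is adjacent to the
nearest `k/2` vertices in each direction around the circle. -/
def hararyEven (k n : ℕ) : SimpleGraph (Fin n) where
  Adj i j := i ≠ j ∧ circDist n i j ≤ k / 2
  symm := ⟨by
    intro i j h
    exact ⟨h.1.symm, by rw [circDist_comm]; exact h.2⟩⟩
  loopless := ⟨fun i h => h.1 rfl⟩

/-- The Harary graph `H_{k,n}` for `k` odd and `n` even: each vertex is adjacent to
the nearest `(k-1)/2` vertices in each direction and to the diametrically opposite
vertex. -/
def hararyOddEven (k n : ℕ) : SimpleGraph (Fin n) where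
  Adj i j := i ≠ j ∧ (circDist n i j ≤ (k - 1) / 2 ∨ circDist n i j = n / 2)
  symm := ⟨by
    intro i j h
    refine ⟨h.1.symm, ?_⟩
    rw [circDist_comm]; exact h.2⟩
  loopless := ⟨fun i h => h.1 rfl⟩

/-- The Harary graph `H_{k,n}` for `k` and `n` both odd: obtained from `H_{k-1,n}` by
adding an edge between vertices `a` and `a + (n-1)/2` for `0 ≤ a ≤ (n-1)/2`. -/
def hararyOddOdd (k n : ℕ) : SimpleGraph (Fin n) where
  Adj i j := i ≠ j ∧ (circDist n i j ≤ (k - 1) / 2 ∨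
    ∃ a : Fin n, a.val ≤ (n - 1) / 2 ∧
      ((i = a ∧ j.val = (a.val + (n - 1) / 2) % n) ∨
       (j = a ∧ i.val = (a.val + (n - 1) / 2) % n)))
  symm := ⟨by
    intro i j h
    refine ⟨h.1.symm, ?_⟩
    rcases h.2 with h2 | ⟨a, ha, hc⟩
    · left; rw [circDist_comm]; exact h2
    · right; exact ⟨a, ha, hc.symm⟩⟩
  loopless := ⟨fun i h => h.1 rfl⟩

/-!
Write `k = 2m + 1` and `n = 2h`. The function `d ↦ min ⌈d/m⌉ (1 + ⌈(h - d)/m⌉)` of the circular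
distance to a fixed vertex `y` vanishes only at `y`, changes by at most one along every edge, and
decreases along a step of length `min d m` towards `y` or along the antipodal jump, so it is the
graph distance to `y`. Writing `h = 2mq + r + m + 2` with `r < 2m`, its level sets
`{d | j < dist}` for `j ≥ 1` are the arcs `(mj, h + m - mj)`, of length `2m(q + 1 - j) + r + 1`;
hence the diameter is `q + 2`, and summing the level sets gives the status of every vertex, which
is the same for all vertices and determines the Wiener index.
-/

namespace SimpleGraph

variable {V : Type*} {G : SimpleGraph V}

lemma le_add_length_of_adj_le (f : V → ℕ) (hf : ∀ a b, G.Adj a b → f a ≤ f b + 1)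
    {x y : V} (p : G.Walk x y) : f x ≤ f y + p.length := by
  induction p with
  | nil => simp
  | cons hadj p ih =>
    rw [Walk.length_cons]
    have := hf _ _ hadj
    omega

lemma exists_walk_length_le_of_exists_adj_lt (f : V → ℕ) {y : V}
    (hf : ∀ a, a ≠ y → ∃ b, G.Adj a b ∧ f b < f a) (x : V) :
    ∃ p : G.Walk x y, p.length ≤ f x := by
  induction hx : f x using Nat.strong_induction_on generalizing x with
  | _ n ih =>
    by_cases hxy : x = y
    · subst hxy
      exact ⟨Walk.nil, Nat.zero_le _⟩
    obtain ⟨b, hadj, hb⟩ := hf x hxy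
    obtain ⟨p, hp⟩ := ih (f b) (hx ▸ hb) b rfl
    exact ⟨Walk.cons hadj p, by rw [Walk.length_cons]; omega⟩

theorem dist_eq_of_adj_le_of_exists_adj_lt (f : V → ℕ) {y : V} (hy : f y = 0)
    (hle : ∀ a b, G.Adj a b → f a ≤ f b + 1) (hlt : ∀ a, a ≠ y → ∃ b, G.Adj a b ∧ f b < f a)
    (x : V) : G.dist x y = f x := by
  obtain ⟨p, hp⟩ := exists_walk_length_le_of_exists_adj_lt f hlt x
  obtain ⟨q, hq⟩ := p.reachable.exists_walk_length_eq_dist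
  have := le_add_length_of_adj_le f hle q
  have := dist_le p
  omega

end SimpleGraph

namespace Fin

lemma val_sub_eq_ite {n : ℕ} (a b : Fin n) :
    ((a - b : Fin n) : ℕ) = if b.val ≤ a.val then a.val - b.val else n + a.val - b.val := by
  split_ifs with h
  · exact coe_sub_iff_le.2 h
  · exact coe_sub_iff_lt.2 (not_le.1 h)

end Fin

section Circle

variable {n : ℕ}

lemma circDist_eq_min_sub (i j : Fin n) : circDist n i j = min (i - j).val (j - i).val := by
  unfold circDist
  rw [Fin.val_sub, Fin.val_sub]
  have := i.isLt; have := j.isLt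
  congr 2 <;> omega

lemma circDist_le_half (i j : Fin n) : circDist n i j ≤ n / 2 := by
  rw [circDist_eq_min_sub, Fin.val_sub_eq_ite, Fin.val_sub_eq_ite]
  have := i.isLt; have := j.isLt
  split_ifs <;> omega

lemma circDist_eq_zero_iff {i j : Fin n} : circDist n i j = 0 ↔ i = j := by
  rw [circDist_eq_min_sub, Fin.val_sub_eq_ite, Fin.val_sub_eq_ite, Fin.ext_iff]
  have := i.isLt; have := j.isLt
  split_ifs <;> omega

lemma circDist_triangle (i j k : Fin n) : circDist n i j ≤ circDist n i k + circDist n k j := by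
  simp only [circDist_eq_min_sub, Fin.val_sub_eq_ite]
  have := i.isLt; have := j.isLt; have := k.isLt
  split_ifs <;> omega

lemma circDist_antipode {h : ℕ} {i k : Fin (2 * h)} (hik : circDist (2 * h) i k = h)
    (j : Fin (2 * h)) : circDist (2 * h) k j = h - circDist (2 * h) i j := by
  simp only [circDist_eq_min_sub, Fin.val_sub_eq_ite] at hik ⊢
  have := i.isLt; have := j.isLt; have := k.isLt
  split_ifs at hik ⊢ <;> omega

lemma exists_circDist_eq (i : Fin n) {s : ℕ} (hs : s ≤ n / 2) : ∃ k, circDist n i k = s := by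
  have := i.isLt
  refine ⟨i + ⟨s, by omega⟩, ?_⟩
  simp only [circDist_eq_min_sub, Fin.val_sub_eq_ite, Fin.val_add_eq_ite]
  split_ifs <;> omega

lemma exists_circDist_eq_and_circDist_eq_sub (i j : Fin n) {s : ℕ} (hs : s ≤ circDist n i j) :
    ∃ k, circDist n i k = s ∧ circDist n k j = circDist n i j - s := by
  have hsn := (hs.trans (circDist_le_half i j))
  have := i.isLt; have := j.isLt
  by_cases hij : (i - j).val ≤ (j - i).val
  · refine ⟨i - ⟨s, by omega⟩, ?_⟩
    simp only [circDist_eq_min_sub, Fin.val_sub_eq_ite] at hs hij ⊢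
    split_ifs at hs hij ⊢ <;> omega
  · refine ⟨i + ⟨s, by omega⟩, ?_⟩
    simp only [circDist_eq_min_sub, Fin.val_sub_eq_ite, Fin.val_add_eq_ite] at hs hij ⊢
    split_ifs at hs hij ⊢ <;> omega

lemma sum_circDist {M : Type*} [AddCommMonoid M] (i : Fin n) (g : ℕ → M) :
    ∑ j, g (circDist n i j) = ∑ u ∈ range n, g (min u (n - u)) := by
  have : NeZero n := NeZero.of_pos i.pos
  rw [← Fin.sum_univ_eq_sum_range (fun u => g (min u (n - u)))]
  refine Fintype.sum_equiv (Equiv.subRight i) _ _ fun j => ?_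
  rw [circDist_eq_min_sub, Equiv.subRight_apply, Fin.val_sub_eq_ite, Fin.val_sub_eq_ite]
  have := i.isLt; have := j.isLt
  congr 1
  split_ifs <;> omega

lemma sum_range_two_mul_min {M : Type*} [AddCommMonoid M] {h : ℕ} (hh : 0 < h) (g : ℕ → M) :
    ∑ u ∈ range (2 * h), g (min u (2 * h - u)) = g 0 + g h + 2 • ∑ d ∈ Ico 1 h, g d := by
  have lower : ∑ u ∈ Ico 1 h, g (min u (2 * h - u)) = ∑ d ∈ Ico 1 h, g d :=
    sum_congr rfl fun u hu => by rw [mem_Ico] at hu; rw [min_eq_left (by omega)]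
  have upper : ∑ u ∈ Ico (h + 1) (2 * h), g (min u (2 * h - u)) = ∑ d ∈ Ico 1 h, g d := by
    have := sum_Ico_reflect (fun u => g (min u (2 * h - u))) 1 (n := 2 * h)
      (by omega : h ≤ 2 * h + 1)
    rw [show 2 * h + 1 - h = h + 1 by omega, show 2 * h + 1 - 1 = 2 * h by omega] at this
    rw [← this]
    exact sum_congr rfl fun d hd => by rw [mem_Ico] at hd; congr 1; omega
  rw [range_eq_Ico, ← sum_Ico_consecutive _ (Nat.zero_le (h + 1)) (by omega : h + 1 ≤ 2 * h),
    sum_Ico_succ_top (Nat.zero_le h), sum_eq_sum_Ico_succ_bot hh, lower, upper, two_nsmul]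
  simp only [Nat.sub_zero, min_eq_left (Nat.zero_le _), min_self, show 2 * h - h = h by omega]
  abel

end Circle

lemma Finset.sum_eq_sum_range_card_filter_lt {α : Type*} {s : Finset α} {f : α → ℕ} {N : ℕ}
    (hf : ∀ a ∈ s, f a ≤ N) : ∑ a ∈ s, f a = ∑ j ∈ range N, #{a ∈ s | j < f a} := by
  simp only [card_filter]
  rw [sum_comm]
  refine sum_congr rfl fun a ha => ?_
  rw [← card_filter, show {j ∈ range N | j < f a} = range (f a) by
    ext j; simp only [mem_filter, mem_range]; have := hf a ha; omega, card_range]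

/-- The distance in `H_{2m+1,2h}` between two vertices at circular distance `d ≤ h`: a shortest
path either walks round the cycle in steps of length at most `m`, or first jumps to the antipode
and then walks the remaining `h - d`. -/
def hararyOddEvenDist (m h d : ℕ) : ℕ :=
  min (d ⌈/⌉ m) (1 + (h - d) ⌈/⌉ m)

lemma Nat.lt_ceilDiv_iff_mul_lt {m : ℕ} (hm : 0 < m) {a j : ℕ} : j < a ⌈/⌉ m ↔ m * j < a := by
  rw [← not_le, ceilDiv_le_iff_le_mul hm, not_le]

section HararyOddEvenDist

variable {m h : ℕ}

lemma lt_hararyOddEvenDist_iff (hm : 0 < m) {d : ℕ} (hd : d ≤ h) (j : ℕ) :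
    j < hararyOddEvenDist m h d ↔ m * j < d ∧ d + m * j < h + m := by
  rw [hararyOddEvenDist, lt_min_iff, Nat.lt_ceilDiv_iff_mul_lt hm]
  rcases j with _ | j
  · omega
  · rw [Nat.add_comm 1, Nat.add_lt_add_iff_right, Nat.lt_ceilDiv_iff_mul_lt hm, Nat.mul_succ]
    omega

lemma hararyOddEvenDist_zero : hararyOddEvenDist m h 0 = 0 := by
  simp [hararyOddEvenDist]

lemma hararyOddEvenDist_self (hm : 0 < m) (hh : 0 < h) : hararyOddEvenDist m h h = 1 := by
  have h0 := (lt_hararyOddEvenDist_iff (h := h) hm le_rfl 0).2 (by omega)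
  have h1 := (lt_hararyOddEvenDist_iff (h := h) hm le_rfl 1).not.2 (by omega)
  omega

lemma hararyOddEvenDist_le_succ_of_le_add (hm : 0 < m) {d d' : ℕ} (hd : d ≤ h) (hd' : d' ≤ h)
    (h₁ : d ≤ d' + m) (h₂ : d' ≤ d + m) :
    hararyOddEvenDist m h d ≤ hararyOddEvenDist m h d' + 1 := by
  set c := hararyOddEvenDist m h d'
  have hc := (lt_hararyOddEvenDist_iff hm hd' c).not.1 (lt_irrefl c)
  have hc1 := (lt_hararyOddEvenDist_iff hm hd (c + 1)).not.2
  rw [Nat.mul_succ] at hc1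
  omega

lemma hararyOddEvenDist_le_sub_succ (hm : 0 < m) {d : ℕ} (hd : d ≤ h) :
    hararyOddEvenDist m h d ≤ hararyOddEvenDist m h (h - d) + 1 := by
  set c := hararyOddEvenDist m h (h - d)
  have hc := (lt_hararyOddEvenDist_iff hm (Nat.sub_le h d) c).not.1 (lt_irrefl c)
  have hc1 := (lt_hararyOddEvenDist_iff hm hd (c + 1)).not.2
  rw [Nat.mul_succ] at hc1
  omega

lemma hararyOddEvenDist_sub_min_lt_or_sub_lt (hm : 0 < m) {d : ℕ} (hd0 : 0 < d) (hd : d ≤ h) :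
    hararyOddEvenDist m h (d - min d m) < hararyOddEvenDist m h d ∨
      hararyOddEvenDist m h (h - d) < hararyOddEvenDist m h d := by
  set c := hararyOddEvenDist m h d
  have hc := (lt_hararyOddEvenDist_iff hm hd c).not.1 (lt_irrefl c)
  have hc0 := (lt_hararyOddEvenDist_iff hm hd 0).2 (by omega)
  by_contra! hge
  have h₁ := (lt_hararyOddEvenDist_iff hm (by omega : d - min d m ≤ h) (c - 1)).1 (by omega)
  have h₂ := (lt_hararyOddEvenDist_iff hm (Nat.sub_le h d) (c - 1)).1 (by omega)
  have hmc : m * c = m * (c - 1) + m := by rw [← Nat.mul_succ]; congr 1; omega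
  omega

variable {q r : ℕ}

lemma hararyOddEvenDist_le (hm : 0 < m) (hr : r < 2 * m) (hqr : h = 2 * m * q + r + m + 2)
    {d : ℕ} (hd : d ≤ h) : hararyOddEvenDist m h d ≤ q + 2 := by
  have := (lt_hararyOddEvenDist_iff hm hd (q + 2)).not.2
  rw [Nat.mul_add, Nat.mul_assoc] at *
  omega

lemma hararyOddEvenDist_mul_succ_add_one (hm : 0 < m) (hr : r < 2 * m)
    (hqr : h = 2 * m * q + r + m + 2) :
    m * (q + 1) + 1 ≤ h ∧ hararyOddEvenDist m h (m * (q + 1) + 1) = q + 2 := by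
  have hd : m * (q + 1) + 1 ≤ h := by rw [Nat.mul_succ, Nat.mul_assoc] at *; omega
  refine ⟨hd, le_antisymm (hararyOddEvenDist_le hm hr hqr hd) ?_⟩
  have := (lt_hararyOddEvenDist_iff hm hd (q + 1)).2
  rw [Nat.mul_succ, Nat.mul_assoc] at *
  omega

lemma filter_lt_hararyOddEvenDist (hm : 0 < m) {j : ℕ} (hj : 0 < j) :
    {d ∈ Ico 1 h | j < hararyOddEvenDist m h d} = Ioo (m * j) (h + m - m * j) := by
  ext d
  simp only [mem_filter, mem_Ico, mem_Ioo]
  constructor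
  · rintro ⟨hd, hlt⟩
    have := (lt_hararyOddEvenDist_iff hm hd.2.le j).1 hlt
    omega
  · rintro hd
    have : m ≤ m * j := Nat.le_mul_of_pos_right m hj
    exact ⟨by omega, (lt_hararyOddEvenDist_iff hm (by omega) j).2 (by omega)⟩

lemma sum_hararyOddEvenDist (hm : 0 < m) (hr : r < 2 * m) (hqr : h = 2 * m * q + r + m + 2) :
    ∑ d ∈ Ico 1 h, hararyOddEvenDist m h d + 1 = h + m * q * (q + 1) + (q + 1) * (r + 1) := by
  have level (j : ℕ) (hj : j < q + 1) :
      #{d ∈ Ico 1 h | j + 1 < hararyOddEvenDist m h d} = 2 * m * (q - j) + r + 1 := by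
    rw [filter_lt_hararyOddEvenDist hm j.succ_pos, Nat.card_Ioo, Nat.mul_succ]
    have : m * (q - j) + m * j = m * q := by rw [← Nat.mul_add, Nat.sub_add_cancel (by omega)]
    rw [Nat.mul_assoc] at *
    omega
  have level_zero : #{d ∈ Ico 1 h | 0 < hararyOddEvenDist m h d} = h - 1 := by
    rw [filter_true_of_mem fun d hd => (lt_hararyOddEvenDist_iff hm (mem_Ico.1 hd).2.le 0).2
      (by rw [mem_Ico] at hd; omega), Nat.card_Ico]
  have gauss : ∑ j ∈ range (q + 1), (2 * m * j + r + 1) = m * q * (q + 1) + (q + 1) * (r + 1) := by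
    rw [sum_add_distrib, sum_add_distrib, ← mul_sum, sum_const, sum_const, card_range,
      smul_eq_mul, smul_eq_mul, mul_one, show 2 * m * ∑ j ∈ range (q + 1), j =
        m * ((∑ j ∈ range (q + 1), j) * 2) by ring, sum_range_id_mul_two, Nat.add_sub_cancel]
    ring
  rw [sum_eq_sum_range_card_filter_lt fun d hd =>
      hararyOddEvenDist_le hm hr hqr (mem_Ico.1 hd).2.le,
    sum_range_succ', level_zero, sum_congr rfl fun j hj => level j (mem_range.1 hj)]
  rw [← sum_range_reflect, Nat.add_sub_cancel] at gauss
  omega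

end HararyOddEvenDist

section HararyOddEven

variable {m h : ℕ}

lemma hararyOddEven_adj_iff {x y : Fin (2 * h)} :
    (hararyOddEven (2 * m + 1) (2 * h)).Adj x y ↔
      x ≠ y ∧ (circDist (2 * h) x y ≤ m ∨ circDist (2 * h) x y = h) := by
  simp only [hararyOddEven, Nat.add_sub_cancel, Nat.mul_div_cancel_left _ two_pos]

theorem dist_hararyOddEven (hm : 0 < m) (x y : Fin (2 * h)) :
    (hararyOddEven (2 * m + 1) (2 * h)).dist x y =
      hararyOddEvenDist m h (circDist (2 * h) x y) := by
  have hle (a : Fin (2 * h)) : circDist (2 * h) a y ≤ h := by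
    simpa using circDist_le_half a y
  refine dist_eq_of_adj_le_of_exists_adj_lt
    (fun a => hararyOddEvenDist m h (circDist (2 * h) a y))
    (by rw [circDist_eq_zero_iff.2 rfl, hararyOddEvenDist_zero]) ?_ ?_ x
  · intro a b hab
    rcases (hararyOddEven_adj_iff.1 hab).2 with hshort | hanti
    · have := circDist_triangle a y b
      have := circDist_triangle b y a
      have := circDist_comm (2 * h) a b
      exact hararyOddEvenDist_le_succ_of_le_add hm (hle a) (hle b) (by omega) (by omega)
    · rw [circDist_antipode hanti]
      exact hararyOddEvenDist_le_sub_succ hm (hle a)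
  · intro a ha
    have hpos : 0 < circDist (2 * h) a y := Nat.pos_of_ne_zero (circDist_eq_zero_iff.not.2 ha)
    rcases hararyOddEvenDist_sub_min_lt_or_sub_lt hm hpos (hle a) with hstep | hjump
    · obtain ⟨b, hab, hby⟩ := exists_circDist_eq_and_circDist_eq_sub a y (min_le_left _ m)
      refine ⟨b, hararyOddEven_adj_iff.2 ⟨?_, Or.inl (hab ▸ min_le_right _ _)⟩, ?_⟩
      · rintro rfl
        rw [circDist_eq_zero_iff.2 rfl] at hab
        omega
      · simpa only [hby] using hstep
    · obtain ⟨b, hab⟩ := exists_circDist_eq a (s := h) (by omega)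
      refine ⟨b, hararyOddEven_adj_iff.2 ⟨?_, Or.inr hab⟩, ?_⟩
      · rintro rfl
        rw [circDist_eq_zero_iff.2 rfl] at hab
        have := a.pos
        omega
      · simpa only [circDist_antipode hab] using hjump

variable {q r : ℕ}

lemma graphDiam_hararyOddEven (hm : 0 < m) (hr : r < 2 * m) (hqr : h = 2 * m * q + r + m + 2) :
    graphDiam (hararyOddEven (2 * m + 1) (2 * h)) = q + 2 := by
  refine le_antisymm (Finset.sup_le fun p _ => ?_) ?_
  · rw [dist_hararyOddEven hm]
    exact hararyOddEvenDist_le hm hr hqr (by simpa using circDist_le_half p.1 p.2)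
  · obtain ⟨hd, hD⟩ := hararyOddEvenDist_mul_succ_add_one hm hr hqr
    let x : Fin (2 * h) := ⟨0, by omega⟩
    obtain ⟨y, hxy⟩ := exists_circDist_eq x (s := m * (q + 1) + 1) (by omega)
    calc q + 2 = (hararyOddEven (2 * m + 1) (2 * h)).dist x y := by
          rw [dist_hararyOddEven hm, hxy, hD]
      _ ≤ graphDiam (hararyOddEven (2 * m + 1) (2 * h)) :=
          Finset.le_sup (f := fun p => (hararyOddEven (2 * m + 1) (2 * h)).dist p.1 p.2)
            (mem_univ (x, y))

lemma status_hararyOddEven (hm : 0 < m) (hr : r < 2 * m) (hqr : h = 2 * m * q + r + m + 2)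
    (x : Fin (2 * h)) :
    status (hararyOddEven (2 * m + 1) (2 * h)) x + 1 =
      2 * (h + m * q * (q + 1) + (q + 1) * (r + 1)) := by
  have hh : 0 < h := by omega
  rw [status, sum_congr rfl fun y _ => dist_hararyOddEven hm x y, sum_circDist,
    sum_range_two_mul_min hh, hararyOddEvenDist_zero, hararyOddEvenDist_self hm hh,
    ← sum_hararyOddEvenDist hm hr hqr, smul_eq_mul]
  ring

end HararyOddEven

lemma wiener_eq_sum_status {V : Type*} [Fintype V] [DecidableEq V] (G : SimpleGraph V) :
    wiener G = (∑ x, status G x : ℕ) / 2 := by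
  have hdiag : ∑ p ∈ univ ×ˢ univ, (G.dist p.1 p.2 : ℚ) =
      ∑ p ∈ univ.offDiag, (G.dist p.1 p.2 : ℚ) := by
    rw [← diag_union_offDiag, sum_union (disjoint_diag_offDiag _), sum_diag]
    simp
  rw [wiener, ← hdiag, sum_product]
  simp [status]

lemma wiener_hararyOddEven {m h q r : ℕ} (hm : 0 < m) (hr : r < 2 * m)
    (hqr : h = 2 * m * q + r + m + 2) :
    wiener (hararyOddEven (2 * m + 1) (2 * h)) =
      h * (2 * (h + m * q * (q + 1) + (q + 1) * (r + 1)) - 1 : ℚ) := by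
  have hstatus (x : Fin (2 * h)) : (status (hararyOddEven (2 * m + 1) (2 * h)) x : ℚ) =
      2 * (h + m * q * (q + 1) + (q + 1) * (r + 1)) - 1 := by
    have := congrArg (Nat.cast (R := ℚ)) (status_hararyOddEven hm hr hqr x)
    push_cast at this
    linarith
  rw [wiener_eq_sum_status, Nat.cast_sum, sum_congr rfl fun x _ => hstatus x, sum_const,
    card_univ, Fintype.card_fin, nsmul_eq_mul]
  push_cast
  ring

/-- For `k ≥ 3` odd, `n ≥ 3k + 1` even, with `D = ⌊(n-k-3)/(2(k-1))⌋ + 2`: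
`H_{k,n}` has diameter `D` and Wiener index
`(1/4)·n·D·(2n+4k-8-2(k-1)D) - (1/2)·n·(k-2)`. -/
theorem hararyOddEven_large (k n : ℕ) (hk : 3 ≤ k) (hko : Odd k) (hne : Even n)
    (h1 : 3 * k + 1 ≤ n) :
    graphDiam (hararyOddEven k n) = (n - k - 3) / (2 * (k - 1)) + 2 ∧
    wiener (hararyOddEven k n) =
      (1 / 4 : ℚ) * (n : ℚ) * (((n - k - 3) / (2 * (k - 1)) + 2 : ℕ) : ℚ) *
        (2 * (n : ℚ) + 4 * (k : ℚ) - 8 -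
          2 * ((k : ℚ) - 1) * (((n - k - 3) / (2 * (k - 1)) + 2 : ℕ) : ℚ)) -
      (1 / 2 : ℚ) * (n : ℚ) * ((k : ℚ) - 2) := by
  obtain ⟨m, rfl⟩ := hko
  obtain ⟨h, rfl⟩ : ∃ h, n = 2 * h := ⟨n / 2, by obtain ⟨t, rfl⟩ := hne; omega⟩
  have hm : 0 < m := by omega
  obtain ⟨q, r, hr, rfl⟩ : ∃ q r, r < 2 * m ∧ h = 2 * m * q + r + m + 2 :=
    ⟨(h - m - 2) / (2 * m), (h - m - 2) % (2 * m), Nat.mod_lt _ (by omega),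
      by have := Nat.div_add_mod (h - m - 2) (2 * m); omega⟩
  have hD :
      (2 * (2 * m * q + r + m + 2) - (2 * m + 1) - 3) / (2 * (2 * m + 1 - 1)) + 2 = q + 2 := by
    rw [show 2 * (2 * m * q + r + m + 2) - (2 * m + 1) - 3 = 2 * r + 4 * m * q by
        rw [Nat.mul_assoc, Nat.mul_assoc]; omega,
      show 2 * (2 * m + 1 - 1) = 4 * m by omega, Nat.add_mul_div_left _ _ (by omega),
      Nat.div_eq_of_lt (by omega), Nat.zero_add]
  rw [hD]
  refine ⟨graphDiam_hararyOddEven hm hr rfl, ?_⟩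
  rw [wiener_hararyOddEven hm hr rfl]
  push_cast
  ring
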